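/- Let d ≥ 1, T ≥ 1, let x_1, …, x_T ∈ ℝ^d be vectors with ‖x_t‖₂ ≤ 1 for all t ∈ [T], and let λ > 0. Define H_T = { t ∈ [T] : ‖x_t‖²_{V_{t-1}(λ)⁻¹} > 1 }. Then |H_T| ≤ (d / log 2) · log( 1 + |H_T| / (λ·d) ). -/

import Mathlib

/-!
Write `M(S) = λ I + ∑_{s ∈ S} x_s x_sᵀ`, so that `V_k = M({1, …, k})`. Adding the elements of
`H_T` to `S` in increasing order, the matrix determinant lemma multiplies `det M(S)` by
`1 + ‖x_t‖²_{M(S)⁻¹}`, and this factor exceeds `2`: `M(S) ≤ V_{t-1}` in the Loewner order and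
inversion reverses that order. Hence `det M(H_T) ≥ 2^{|H_T|} λ^d`. On the other hand, AM-GM on the
eigenvalues gives `det M(H_T) ≤ (tr M(H_T) / d)^d ≤ (λ + |H_T| / d)^d`, as `‖x_t‖ ≤ 1`. Comparing
the two bounds and taking logarithms gives the claim.
-/

open Finset Matrix
open scoped MatrixOrder

theorem Real.prod_le_sum_div_card_pow {ι : Type*} (s : Finset ι) {z : ι → ℝ}
    (hz : ∀ i ∈ s, 0 ≤ z i) : ∏ i ∈ s, z i ≤ ((∑ i ∈ s, z i) / #s) ^ #s := by
  rcases s.eq_empty_or_nonempty with rfl | hs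
  · simp
  have hcard : (0 : ℝ) < #s := by exact_mod_cast hs.card_pos
  have amgm := Real.geom_mean_le_arith_mean s (fun _ ↦ 1) z (fun _ _ ↦ zero_le_one)
    (by simpa using hcard) hz
  simp only [Real.rpow_one, sum_const, nsmul_eq_mul, mul_one, one_mul] at amgm
  calc ∏ i ∈ s, z i = ((∏ i ∈ s, z i) ^ ((#s : ℝ)⁻¹)) ^ #s := by
        rw [← Real.rpow_natCast, ← Real.rpow_mul (prod_nonneg hz), inv_mul_cancel₀ hcard.ne',
          Real.rpow_one]
    _ ≤ ((∑ i ∈ s, z i) / #s) ^ #s := by gcongr; exact Real.rpow_nonneg (prod_nonneg hz) _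

namespace Matrix

theorem posSemidef_sum_vecMulVec_self {n ι : Type*} [Finite n] (x : ι → n → ℝ) (S : Finset ι) :
    (∑ s ∈ S, vecMulVec (x s) (x s)).PosSemidef :=
  sum_induction _ PosSemidef (fun _ _ ↦ PosSemidef.add) PosSemidef.zero fun s _ ↦ by
    simpa using posSemidef_vecMulVec_self_star (x s)

variable {n : Type*} [Fintype n] [DecidableEq n]

theorem det_add_vecMulVec {α : Type*} [CommRing α] {A : Matrix n n α} (hA : IsUnit A.det)
    (u v : n → α) : (A + vecMulVec u v).det = A.det * (1 + v ⬝ᵥ A⁻¹ *ᵥ u) := by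
  rw [vecMulVec_eq Unit, det_add_replicateCol_mul_replicateRow hA, det_unique (n := Unit)]
  simp only [PUnit.default_eq_unit, add_apply, one_apply_eq, mul_apply, replicateRow_apply,
    replicateCol_apply, dotProduct, mulVec, mul_sum, mul_comm, mul_left_comm]
  rw [sum_comm]

theorem PosSemidef.det_le_trace_div_card_pow {A : Matrix n n ℝ} (hA : A.PosSemidef) :
    A.det ≤ (A.trace / Fintype.card n) ^ Fintype.card n := by
  rw [hA.1.det_eq_prod_eigenvalues, hA.1.trace_eq_sum_eigenvalues]
  simpa using Real.prod_le_sum_div_card_pow univ fun i _ ↦ hA.eigenvalues_nonneg i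

/-- The left-hand side is maximised at `y = A⁻¹ v`, where equality holds. -/
theorem PosDef.two_mul_dotProduct_sub_le {A : Matrix n n ℝ} (hA : A.PosDef) (v y : n → ℝ) :
    2 * (y ⬝ᵥ v) - y ⬝ᵥ A *ᵥ y ≤ v ⬝ᵥ A⁻¹ *ᵥ v := by
  set w := A⁻¹ *ᵥ v
  have hAw : A *ᵥ w = v := by
    rw [mulVec_mulVec, mul_nonsing_inv _ hA.det_pos.ne'.isUnit, one_mulVec]
  have hsymm : w ⬝ᵥ A *ᵥ y = y ⬝ᵥ A *ᵥ w := by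
    rw [dotProduct_mulVec, ← mulVec_transpose, dotProduct_comm,
      ← conjTranspose_eq_transpose_of_trivial, hA.1.eq]
  have hnonneg := hA.posSemidef.dotProduct_mulVec_nonneg (y - w)
  rw [star_trivial, mulVec_sub, sub_dotProduct, dotProduct_sub, dotProduct_sub, hsymm, hAw]
    at hnonneg
  rw [dotProduct_comm v w]
  linarith

theorem PosDef.dotProduct_inv_mulVec_antitone {A B : Matrix n n ℝ} (hA : A.PosDef) (hAB : A ≤ B)
    (v : n → ℝ) : v ⬝ᵥ B⁻¹ *ᵥ v ≤ v ⬝ᵥ A⁻¹ *ᵥ v := by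
  have hB : B.PosDef := by simpa using hA.add_posSemidef hAB
  set u := B⁻¹ *ᵥ v
  have hBu : B *ᵥ u = v := by
    rw [mulVec_mulVec, mul_nonsing_inv _ hB.det_pos.ne'.isUnit, one_mulVec]
  have hAu : u ⬝ᵥ A *ᵥ u ≤ u ⬝ᵥ B *ᵥ u := by
    have := hAB.dotProduct_mulVec_nonneg u
    rw [star_trivial, sub_mulVec, dotProduct_sub] at this
    linarith
  calc v ⬝ᵥ B⁻¹ *ᵥ v = 2 * (u ⬝ᵥ v) - u ⬝ᵥ B *ᵥ u := by
        rw [hBu, dotProduct_comm v u]; ring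
    _ ≤ 2 * (u ⬝ᵥ v) - u ⬝ᵥ A *ᵥ u := by linarith
    _ ≤ v ⬝ᵥ A⁻¹ *ᵥ v := hA.two_mul_dotProduct_sub_le v u

end Matrix

section RegularizedGram

variable {n ι : Type*} [DecidableEq n] (lam : ℝ) (x : ι → n → ℝ)

def regularizedGram (S : Finset ι) : Matrix n n ℝ :=
  lam • 1 + ∑ s ∈ S, vecMulVec (x s) (x s)

theorem regularizedGram_mono [Fintype n] : Monotone (regularizedGram (n := n) lam x) := by
  classical
  intro S S' hSS'
  rw [le_iff, regularizedGram, regularizedGram, add_sub_add_left_eq_sub, ← sum_sdiff hSS',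
    add_sub_cancel_right]
  exact posSemidef_sum_vecMulVec_self x _

theorem trace_regularizedGram [Fintype n] (S : Finset ι) :
    (regularizedGram lam x S).trace = lam * Fintype.card n + ∑ s ∈ S, x s ⬝ᵥ x s := by
  simp [regularizedGram, trace_sum]

theorem regularizedGram_insert [DecidableEq ι] {a : ι} {S : Finset ι} (ha : a ∉ S) :
    regularizedGram lam x (insert a S) = regularizedGram lam x S + vecMulVec (x a) (x a) := by
  rw [regularizedGram, regularizedGram, sum_insert ha, add_comm (vecMulVec _ _), add_assoc]

variable {lam} [Fintype n]

theorem regularizedGram_posDef (hlam : 0 < lam) (S : Finset ι) :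
    (regularizedGram lam x S).PosDef :=
  (PosDef.one.smul hlam).add_posSemidef (posSemidef_sum_vecMulVec_self x S)

variable {x}

theorem det_regularizedGram_le (hlam : 0 < lam) {S : Finset ι} (hx : ∀ s ∈ S, x s ⬝ᵥ x s ≤ 1) :
    (regularizedGram lam x S).det ≤ (lam + #S / Fintype.card n) ^ Fintype.card n := by
  rcases Nat.eq_zero_or_pos (Fintype.card n) with hn | hn
  · have : IsEmpty n := Fintype.card_eq_zero_iff.1 hn
    simp
  have hpsd := (regularizedGram_posDef x hlam S).posSemidef
  have htrace : (regularizedGram lam x S).trace ≤ lam * Fintype.card n + #S := by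
    rw [trace_regularizedGram]
    simpa using sum_le_card_nsmul S _ 1 hx
  calc (regularizedGram lam x S).det
      ≤ ((regularizedGram lam x S).trace / Fintype.card n) ^ Fintype.card n :=
        hpsd.det_le_trace_div_card_pow
    _ ≤ ((lam * Fintype.card n + #S) / Fintype.card n) ^ Fintype.card n := by
        gcongr
        exact div_nonneg hpsd.trace_nonneg (Nat.cast_nonneg _)
    _ = (lam + #S / Fintype.card n) ^ Fintype.card n := by
        field_simp

theorem two_pow_card_mul_le_det_regularizedGram [LinearOrder ι] (hlam : 0 < lam) (H : Finset ι)
    (hH : ∀ t ∈ H, 1 < x t ⬝ᵥ (regularizedGram lam x {s ∈ H | s < t})⁻¹ *ᵥ x t) :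
    2 ^ #H * lam ^ Fintype.card n ≤ (regularizedGram lam x H).det := by
  induction H using Finset.induction_on_max with
  | empty => simp [regularizedGram]
  | insert a S hlt ih =>
    have haS : a ∉ S := fun ha ↦ (hlt a ha).false
    have hS : ∀ t ∈ S, {s ∈ insert a S | s < t} = {s ∈ S | s < t} := fun t ht ↦ by
      rw [filter_insert, if_neg (hlt t ht).asymm]
    have ha : {s ∈ insert a S | s < a} = S := by
      rw [filter_insert, if_neg (lt_irrefl a), filter_true_of_mem hlt]
    have hdet := (regularizedGram_posDef x hlam S).det_pos
    have hq := hH a (mem_insert_self a S)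
    rw [ha] at hq
    calc 2 ^ #(insert a S) * lam ^ Fintype.card n
        = 2 * (2 ^ #S * lam ^ Fintype.card n) := by rw [card_insert_of_notMem haS]; ring
      _ ≤ 2 * (regularizedGram lam x S).det := by
          gcongr; exact ih fun t ht ↦ hS t ht ▸ hH t (mem_insert_of_mem ht)
      _ ≤ (regularizedGram lam x S).det * (1 + x a ⬝ᵥ (regularizedGram lam x S)⁻¹ *ᵥ x a) := by
          nlinarith
      _ = (regularizedGram lam x (insert a S)).det := by
          rw [regularizedGram_insert lam x haS, det_add_vecMulVec hdet.ne'.isUnit]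

end RegularizedGram

theorem le_div_log_two_mul_log_of_two_pow_le {m d : ℕ} {lam : ℝ} (hlam : 0 < lam)
    (h : 2 ^ m * lam ^ d ≤ (lam + m / d) ^ d) :
    (m : ℝ) ≤ d / Real.log 2 * Real.log (1 + m / (lam * d)) := by
  rcases Nat.eq_zero_or_pos d with rfl | hd
  · have hm : m = 0 := by
      by_contra hm
      exact (one_lt_pow₀ one_lt_two hm).not_ge (by simpa using h)
    simp [hm]
  have hfactor : lam + m / d = lam * (1 + m / (lam * d)) := by field_simp
  rw [hfactor, mul_pow, mul_comm] at h
  have hlog := Real.log_le_log (by positivity) (le_of_mul_le_mul_left h (by positivity))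
  rw [Real.log_pow, Real.log_pow] at hlog
  rw [div_mul_eq_mul_div, le_div_iff₀ (Real.log_pos one_lt_two)]
  linarith

theorem elliptical_potential_count_implicit_general (d T : ℕ)
    (x : ℕ → Fin d → ℝ)
    (hx : ∀ t ∈ Finset.Icc 1 T, Real.sqrt (∑ i, (x t i) ^ 2) ≤ 1)
    (lam : ℝ) (hlam : 0 < lam)
    (V : ℕ → Matrix (Fin d) (Fin d) ℝ)
    (hV : ∀ k, V k = lam • (1 : Matrix (Fin d) (Fin d) ℝ)
        + ∑ s ∈ Finset.Icc 1 k, Matrix.vecMulVec (x s) (x s))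
    (H : Finset ℕ)
    (hH : ∀ t, t ∈ H ↔ t ∈ Finset.Icc 1 T ∧ 1 < x t ⬝ᵥ (V (t - 1))⁻¹ *ᵥ x t) :
    (H.card : ℝ) ≤ (d / Real.log 2) * Real.log (1 + H.card / (lam * d)) := by
  have hnorm : ∀ t ∈ H, x t ⬝ᵥ x t ≤ 1 := fun t ht ↦ by
    simpa [dotProduct, sq] using Real.sqrt_le_one.1 (hx t ((hH t).1 ht).1)
  have hpotential : ∀ t ∈ H, 1 < x t ⬝ᵥ (regularizedGram lam x {s ∈ H | s < t})⁻¹ *ᵥ x t := by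
    intro t ht
    have hpast : {s ∈ H | s < t} ⊆ Icc 1 (t - 1) := fun s hs ↦ by
      have := ((hH s).1 (mem_filter.1 hs).1).1
      simp only [mem_filter, mem_Icc] at hs this ⊢
      omega
    refine ((hH t).1 ht).2.trans_le ?_
    rw [hV]
    exact (regularizedGram_posDef x hlam _).dotProduct_inv_mulVec_antitone
      (regularizedGram_mono lam x hpast) (x t)
  have hlower := two_pow_card_mul_le_det_regularizedGram hlam H hpotential
  have hupper := det_regularizedGram_le hlam hnorm
  rw [Fintype.card_fin] at hlower hupper
  exact le_div_log_two_mul_log_of_two_pow_le hlam (hlower.trans hupper)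

/-- Implicit intermediate bound on the elliptical potential count. -/
theorem elliptical_potential_count_implicit (d T : ℕ) (hd : 1 ≤ d) (hT : 1 ≤ T)
    (x : ℕ → Fin d → ℝ)
    (hx : ∀ t ∈ Finset.Icc 1 T, Real.sqrt (∑ i, (x t i) ^ 2) ≤ 1)
    (lam : ℝ) (hlam : 0 < lam)
    (V : ℕ → Matrix (Fin d) (Fin d) ℝ)
    (hV : ∀ k, V k = lam • (1 : Matrix (Fin d) (Fin d) ℝ)
        + ∑ s ∈ Finset.Icc 1 k, Matrix.vecMulVec (x s) (x s))
    (H : Finset ℕ)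
    (hH : ∀ t, t ∈ H ↔ t ∈ Finset.Icc 1 T ∧ 1 < x t ⬝ᵥ (V (t - 1))⁻¹ *ᵥ x t) :
    (H.card : ℝ) ≤ (d / Real.log 2) * Real.log (1 + H.card / (lam * d)) :=
  elliptical_potential_count_implicit_general d T x hx lam hlam V hV H hH
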